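/- Let a, b, c, d ∈ ℝ² be points with strictly increasing x-coordinates (the x-coordinate of a is less than that of b, which is less than that of c, which is less than that of d). If the triples (a, b, c) and (a, c, d) are both positively oriented, then the triple (a, b, d) is positively oriented; and if (a, b, c) and (a, c, d) are both negatively oriented, then (a, b, d) is negatively oriented. (Signotope axiom, first form.) -/

import Mathlib

/-! Fixing `a`, the orientation `det3 a p q` is the cross product of `p - a` and `q - a`. For any
four points it satisfies the three-term (Grassmann–Plücker) relation
`(c - a)ₓ · det3 a b d = (d - a)ₓ · det3 a b c + (b - a)ₓ · det3 a c d`,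
whose coefficients are all positive when the x-coordinates increase from `a` to `d`; so the sign of
`det3 a b d` is the common sign of `det3 a b c` and `det3 a c d`. -/

/-- Orientation determinant of three points in the plane:
`det [[1,1,1],[pₓ,qₓ,rₓ],[p_y,q_y,r_y]]`.
The triple `(p,q,r)` is positively oriented iff `det3 p q r > 0`,
and negatively oriented iff `det3 p q r < 0`. -/
noncomputable def det3 (p q r : ℝ × ℝ) : ℝ :=
  Matrix.det !![(1:ℝ), 1, 1; p.1, q.1, r.1; p.2, q.2, r.2]

/-- A set of points in the plane is in general position if no three
distinct points of it are collinear. -/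
def InGenPos (S : Set (ℝ × ℝ)) : Prop :=
  ∀ p ∈ S, ∀ q ∈ S, ∀ r ∈ S, p ≠ q → p ≠ r → q ≠ r →
    ¬ Collinear ℝ ({p, q, r} : Set (ℝ × ℝ))

/-- `P` is a `k`-gon of `S`: a `k`-element subset of `S` in convex position,
i.e. every point of `P` is an extreme point of the convex hull of `P`. -/
def IsGon (k : ℕ) (S P : Set (ℝ × ℝ)) : Prop :=
  P ⊆ S ∧ P.Finite ∧ P.ncard = k ∧
    ∀ p ∈ P, p ∈ Set.extremePoints ℝ (convexHull ℝ P)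

/-- `P` is a `k`-hole of `S`: a `k`-gon of `S` whose convex hull contains
no point of `S` other than the `k` points of `P`. -/
def IsHole (k : ℕ) (S P : Set (ℝ × ℝ)) : Prop :=
  IsGon k S P ∧ ∀ q ∈ S, q ∈ convexHull ℝ P → q ∈ P

lemma det3_eq (p q r : ℝ × ℝ) :
    det3 p q r = (q.1 - p.1) * (r.2 - p.2) - (r.1 - p.1) * (q.2 - p.2) := by
  simp only [det3, Matrix.det_fin_three, Matrix.of_apply, Matrix.cons_val', Matrix.cons_val_zero,
    Matrix.cons_val_one, Matrix.cons_val_two, Matrix.empty_val', Matrix.cons_val_fin_one,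
    Matrix.head_cons, Matrix.tail_cons, Matrix.head_fin_const]
  ring

lemma det3_plucker (a b c d : ℝ × ℝ) :
    (c.1 - a.1) * det3 a b d = (d.1 - a.1) * det3 a b c + (b.1 - a.1) * det3 a c d := by
  simp only [det3_eq]
  ring

/-- Signotope axiom, first form. -/
theorem signotope_axiom_first_form (a b c d : ℝ × ℝ)
    (hab : a.1 < b.1) (hbc : b.1 < c.1) (hcd : c.1 < d.1) :
    (det3 a b c > 0 → det3 a c d > 0 → det3 a b d > 0) ∧
    (det3 a b c < 0 → det3 a c d < 0 → det3 a b d < 0) := by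
  have hba : 0 < b.1 - a.1 := by linarith
  have hca : 0 < c.1 - a.1 := by linarith
  have hda : 0 < d.1 - a.1 := by linarith
  constructor
  · intro habc hacd
    have h : 0 < (c.1 - a.1) * det3 a b d := by
      rw [det3_plucker]
      exact add_pos (mul_pos hda habc) (mul_pos hba hacd)
    exact pos_of_mul_pos_right h hca.le
  · intro habc hacd
    have h : (c.1 - a.1) * det3 a b d < 0 := by
      rw [det3_plucker]
      exact add_neg (mul_neg_of_pos_of_neg hda habc) (mul_neg_of_pos_of_neg hba hacd)
    exact neg_of_mul_neg_right h hca.le
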